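/- Let n ≥ 1, let c = (c₁,…,cₙ) ∈ ℂⁿ \ {0}, let ξ ∈ ℂ, and let g be a polynomial function on ℂⁿ such that g(z + c) − g(z) = ξ for all z ∈ ℂⁿ. Then there exist a linear function L(z) = a₁z₁ + ⋯ + aₙzₙ with a₁c₁ + ⋯ + aₙcₙ = ξ, a polynomial function H on ℂⁿ with H(z + c) = H(z) for all z, and a constant B ∈ ℂ, such that g(z) = L(z) + H(z) + B for all z ∈ ℂⁿ. -/
import Mathlib


noncomputable section

/-- `f` is a polynomial function on `ℂⁿ`. -/
def IsPolyFun (n : ℕ) (f : (Fin n → ℂ) → ℂ) : Prop :=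
  ∃ P : MvPolynomial (Fin n) ℂ, ∀ z, f z = MvPolynomial.eval z P

theorem polynomial_constant_difference_decomposition
    (n : ℕ) (hn : 1 ≤ n) (c : Fin n → ℂ) (hc : c ≠ 0) (ξ : ℂ)
    (g : (Fin n → ℂ) → ℂ) (hg : IsPolyFun n g)
    (hdiff : ∀ z, g (z + c) - g z = ξ) :
    ∃ (aa : Fin n → ℂ) (H : (Fin n → ℂ) → ℂ) (B : ℂ),
      (∑ k, aa k * c k) = ξ ∧
      IsPolyFun n H ∧ (∀ z, H (z + c) = H z) ∧
      (∀ z, g z = (∑ k, aa k * z k) + H z + B) := by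
  obtain ⟨k, hk⟩ : ∃ k, c k ≠ 0 := by
    by_contra h
    push_neg at h
    exact hc (funext h)
  set aa : Fin n → ℂ := fun j => if j = k then ξ / c k else 0 with haa
  have hsum : ∀ z : Fin n → ℂ, (∑ j, aa j * z j) = (ξ / c k) * z k := by
    intro z
    rw [Finset.sum_eq_single k]
    · simp [haa]
    · intro b _ hb; simp [haa, hb]
    · simp
  refine ⟨aa, fun z => g z - (∑ j, aa j * z j), 0, ?_, ?_, ?_, ?_⟩
  · rw [hsum]; field_simp
  · obtain ⟨P, hP⟩ := hg
    refine ⟨P - MvPolynomial.C (ξ / c k) * MvPolynomial.X k, fun z => ?_⟩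
    simp [hP z, hsum z]
  · intro z
    have h1 := hdiff z
    simp only []
    rw [hsum, hsum]
    have : (z + c) k = z k + c k := rfl
    rw [this]
    field_simp
    ring_nf
    linear_combination (c k) * h1
  · intro z; ring
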